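/- For all vectors w, v ∈ Q and all indices 1 ≤ i, k ≤ m with i ≠ k, the mixed commutator [E_{i,w}, E*_{k,v}] acts on M by [E_{i,w}, E*_{k,v}](z, x, f) = (z, x − f_k(x)·⟨w,v⟩·x_i, f + f(x_i)·⟨v,w⟩·f_k). -/

import Mathlib

open QuadraticMap
open scoped commutatorElement

/-- The DSER elementary orthogonal transformation `E_{i,w}` on `M = Q ⊕ P ⊕ P*`,
`P = A^m`:  `E_{i,w}(z,x,f) = (z − f(xᵢ)•w, x + ⟨w,z⟩•xᵢ − f(xᵢ)·q(w)•xᵢ, f)`. -/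
noncomputable def Eplus {A Q : Type*} [CommRing A] [AddCommGroup Q] [Module A Q]
    {m : ℕ} (q : QuadraticForm A Q) (i : Fin m) (w : Q) :
    (Q × (Fin m → A) × (Fin m → A)) ≃ₗ[A] (Q × (Fin m → A) × (Fin m → A)) where
  toFun p := (p.1 - p.2.2 i • w,
    p.2.1 + polar ⇑q w p.1 • (Pi.single i 1 : Fin m → A)
      - (p.2.2 i * q w) • (Pi.single i 1 : Fin m → A),
    p.2.2)
  invFun p := (p.1 + p.2.2 i • w,
    p.2.1 - polar ⇑q w p.1 • (Pi.single i 1 : Fin m → A)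
      - (p.2.2 i * q w) • (Pi.single i 1 : Fin m → A),
    p.2.2)
  map_add' p p' := by
    obtain ⟨z, x, f⟩ := p
    obtain ⟨z', x', f'⟩ := p'
    refine Prod.ext ?_ (Prod.ext ?_ rfl)
    · show z + z' - (f i + f' i) • w = (z - f i • w) + (z' - f' i • w)
      module
    · show x + x' + polar ⇑q w (z + z') • (Pi.single i 1 : Fin m → A)
        - ((f i + f' i) * q w) • (Pi.single i 1 : Fin m → A) = _
      rw [polar_add_right]
      show _ = (x + polar ⇑q w z • (Pi.single i 1 : Fin m → A) - (f i * q w) • (Pi.single i 1 : Fin m → A))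
        + (x' + polar ⇑q w z' • (Pi.single i 1 : Fin m → A) - (f' i * q w) • (Pi.single i 1 : Fin m → A))
      module
  map_smul' a p := by
    obtain ⟨z, x, f⟩ := p
    refine Prod.ext ?_ (Prod.ext ?_ rfl)
    · show a • z - (a • f) i • w = a • (z - f i • w)
      simp only [Pi.smul_apply, smul_eq_mul]
      module
    · show a • x + polar ⇑q w (a • z) • (Pi.single i 1 : Fin m → A)
        - ((a • f) i * q w) • (Pi.single i 1 : Fin m → A)
        = a • (x + polar ⇑q w z • (Pi.single i 1 : Fin m → A) - (f i * q w) • (Pi.single i 1 : Fin m → A))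
      rw [polar_smul_right]
      simp only [Pi.smul_apply, smul_eq_mul]
      module
  left_inv p := by
    obtain ⟨z, x, f⟩ := p
    refine Prod.ext ?_ (Prod.ext ?_ rfl)
    · show z - f i • w + f i • w = z
      module
    · show x + polar ⇑q w z • (Pi.single i 1 : Fin m → A) - (f i * q w) • (Pi.single i 1 : Fin m → A)
        - polar ⇑q w (z - f i • w) • (Pi.single i 1 : Fin m → A)
        - (f i * q w) • (Pi.single i 1 : Fin m → A) = x
      rw [polar_sub_right, polar_smul_right, polar_self]
      simp only [smul_eq_mul]
      module
  right_inv p := by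
    obtain ⟨z, x, f⟩ := p
    refine Prod.ext ?_ (Prod.ext ?_ rfl)
    · show z + f i • w - f i • w = z
      module
    · show x - polar ⇑q w z • (Pi.single i 1 : Fin m → A) - (f i * q w) • (Pi.single i 1 : Fin m → A)
        + polar ⇑q w (z + f i • w) • (Pi.single i 1 : Fin m → A)
        - (f i * q w) • (Pi.single i 1 : Fin m → A) = x
      rw [polar_add_right, polar_smul_right, polar_self]
      simp only [smul_eq_mul]
      module

/-- The DSER elementary orthogonal transformation `E*_{i,w}` on `M = Q ⊕ P ⊕ P*`:
`E*_{i,w}(z,x,f) = (z − fᵢ(x)•w, x, f + ⟨w,z⟩•fᵢ − fᵢ(x)·q(w)•fᵢ)`. -/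
noncomputable def Estar {A Q : Type*} [CommRing A] [AddCommGroup Q] [Module A Q]
    {m : ℕ} (q : QuadraticForm A Q) (i : Fin m) (w : Q) :
    (Q × (Fin m → A) × (Fin m → A)) ≃ₗ[A] (Q × (Fin m → A) × (Fin m → A)) where
  toFun p := (p.1 - p.2.1 i • w,
    p.2.1,
    p.2.2 + polar ⇑q w p.1 • (Pi.single i 1 : Fin m → A)
      - (p.2.1 i * q w) • (Pi.single i 1 : Fin m → A))
  invFun p := (p.1 + p.2.1 i • w,
    p.2.1,
    p.2.2 - polar ⇑q w p.1 • (Pi.single i 1 : Fin m → A)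
      - (p.2.1 i * q w) • (Pi.single i 1 : Fin m → A))
  map_add' p p' := by
    obtain ⟨z, x, f⟩ := p
    obtain ⟨z', x', f'⟩ := p'
    refine Prod.ext ?_ (Prod.ext rfl ?_)
    · show z + z' - (x i + x' i) • w = (z - x i • w) + (z' - x' i • w)
      module
    · show f + f' + polar ⇑q w (z + z') • (Pi.single i 1 : Fin m → A)
        - ((x i + x' i) * q w) • (Pi.single i 1 : Fin m → A) = _
      rw [polar_add_right]
      show _ = (f + polar ⇑q w z • (Pi.single i 1 : Fin m → A)
          - (x i * q w) • (Pi.single i 1 : Fin m → A))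
        + (f' + polar ⇑q w z' • (Pi.single i 1 : Fin m → A)
          - (x' i * q w) • (Pi.single i 1 : Fin m → A))
      module
  map_smul' a p := by
    obtain ⟨z, x, f⟩ := p
    refine Prod.ext ?_ (Prod.ext rfl ?_)
    · show a • z - (a • x) i • w = a • (z - x i • w)
      simp only [Pi.smul_apply, smul_eq_mul]
      module
    · show a • f + polar ⇑q w (a • z) • (Pi.single i 1 : Fin m → A)
        - ((a • x) i * q w) • (Pi.single i 1 : Fin m → A)
        = a • (f + polar ⇑q w z • (Pi.single i 1 : Fin m → A)
          - (x i * q w) • (Pi.single i 1 : Fin m → A))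
      rw [polar_smul_right]
      simp only [Pi.smul_apply, smul_eq_mul]
      module
  left_inv p := by
    obtain ⟨z, x, f⟩ := p
    refine Prod.ext ?_ (Prod.ext rfl ?_)
    · show z - x i • w + x i • w = z
      module
    · show f + polar ⇑q w z • (Pi.single i 1 : Fin m → A)
        - (x i * q w) • (Pi.single i 1 : Fin m → A)
        - polar ⇑q w (z - x i • w) • (Pi.single i 1 : Fin m → A)
        - (x i * q w) • (Pi.single i 1 : Fin m → A) = f
      rw [polar_sub_right, polar_smul_right, polar_self]
      simp only [smul_eq_mul]
      module
  right_inv p := by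
    obtain ⟨z, x, f⟩ := p
    refine Prod.ext ?_ (Prod.ext rfl ?_)
    · show z + x i • w - x i • w = z
      module
    · show f - polar ⇑q w z • (Pi.single i 1 : Fin m → A)
        - (x i * q w) • (Pi.single i 1 : Fin m → A)
        + polar ⇑q w (z + x i • w) • (Pi.single i 1 : Fin m → A)
        - (x i * q w) • (Pi.single i 1 : Fin m → A) = f
      rw [polar_add_right, polar_smul_right, polar_self]
      simp only [smul_eq_mul]
      module


/-!
Since `i ≠ k`, the maps `E_{i,±w}` never change the coordinate `x k` and the maps `E*_{k,±v}`
never change `f i`, so in the commutator every factor acts with the same coefficients `x k` and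
`f i`. Writing the inverses as `E_{i,-w}` and `E*_{k,-v}`, the `Q`-components telescope back to
`z`, and in `P` and `P*` the `q w`, `q v` terms cancel against `polar q w w = 2 q w`, leaving only
the cross terms `polar q w (x k • v)` and `polar q v (f i • w)`.
-/

section

variable {A Q : Type*} [CommRing A] [AddCommGroup Q] [Module A Q] {m : ℕ}
  (q : QuadraticForm A Q) (i : Fin m) (w : Q)

theorem Eplus_apply (z : Q) (x f : Fin m → A) :
    Eplus q i w (z, x, f) =
      (z - f i • w, x + (polar q w z - f i * q w) • Pi.single i 1, f) := by
  simp only [Eplus, LinearEquiv.coe_mk, LinearMap.coe_mk, AddHom.coe_mk, Prod.mk.injEq, true_and,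
    and_true]
  module

theorem Estar_apply (z : Q) (x f : Fin m → A) :
    Estar q i w (z, x, f) =
      (z - x i • w, x, f + (polar q w z - x i * q w) • Pi.single i 1) := by
  simp only [Estar, LinearEquiv.coe_mk, LinearMap.coe_mk, AddHom.coe_mk, Prod.mk.injEq, true_and]
  module

theorem Eplus_inv : (Eplus q i w)⁻¹ = Eplus q i (-w) := by
  ext ⟨z, x, f⟩ <;>
    simp [Eplus, polar_neg_left, sub_eq_add_neg]

theorem Estar_inv : (Estar q i w)⁻¹ = Estar q i (-w) := by
  ext ⟨z, x, f⟩ <;>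
    simp [Estar, polar_neg_left, sub_eq_add_neg]

end

theorem commutator_Eplus_Estar_general
    {A Q : Type*} [CommRing A] [AddCommGroup Q] [Module A Q]
    {m : ℕ} (q : QuadraticForm A Q) (i k : Fin m) (hik : i ≠ k) (w v : Q) :
    ∀ (z : Q) (x f : Fin m → A),
      ⁅Eplus q i w, Estar q k v⁆ (z, x, f)
        = (z,
           x - (x k * polar ⇑q w v) • (Pi.single i 1 : Fin m → A),
           f + (f i * polar ⇑q v w) • (Pi.single k 1 : Fin m → A)) := by
  intro z x f
  simp only [commutatorElement_def, Eplus_inv, Estar_inv, LinearEquiv.mul_apply, Eplus_apply,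
    Estar_apply]
  refine Prod.ext ?_ (Prod.ext ?_ ?_) <;>
    simp only [Pi.add_apply, Pi.smul_apply, smul_eq_mul, Pi.single_eq_of_ne hik,
      Pi.single_eq_of_ne hik.symm, mul_zero, add_zero, polar_sub_right, polar_smul_right,
      polar_neg_left, polar_neg_right, smul_neg, polar_self, polar_comm q v w,
      QuadraticMap.map_neg] <;>
    module

theorem commutator_Eplus_Estar
    {A Q : Type*} [CommRing A] [Invertible (2 : A)] [AddCommGroup Q] [Module A Q]
    {m : ℕ} (q : QuadraticForm A Q) (i k : Fin m) (hik : i ≠ k) (w v : Q) :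
    ∀ (z : Q) (x f : Fin m → A),
      ⁅Eplus q i w, Estar q k v⁆ (z, x, f)
        = (z,
           x - (x k * polar ⇑q w v) • (Pi.single i 1 : Fin m → A),
           f + (f i * polar ⇑q v w) • (Pi.single k 1 : Fin m → A)) :=
  commutator_Eplus_Estar_general q i k hik w v
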